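/- arXiv:2401.00217 — 4 statements merged into one kernel-verified Lean document; each statement's English description precedes it below -/
import Mathlib

section
/- Let a finite family of circles with centers p : C → ℝ² and radii r : C → ℝ, r c > 0, be packed into the disk of radius R > 0 centered at the origin, and let c₁, c₂ ∈ C be two distinct indices. Then there exists a linear isometry T : ℝ² → ℝ² such that the circles with centers T ∘ p and radii r are again packed into the disk of radius R centered at the origin, the point T (p c₁) has both coordinates nonnegative, and the point T (p c₂) = (x₂, y₂) satisfies y₂ ≥ x₂. (This justifies the symmetry-breaking constraints x₁ ≥ 0, y₁ ≥ 0, y₂ ≥ x₂.) -/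
/-!
Reflecting in the coordinate axes where needed moves `p c₁` into the closed first quadrant;
if then `p c₂` lies below the diagonal, the reflection in the diagonal (swapping the
coordinates) fixes the quadrant and moves `p c₂` above it. Linear isometries preserve norms
and distances, so the packing conditions survive.
-/

section Packing

variable {C 𝕜 E F : Type*} [Ring 𝕜] [SeminormedAddCommGroup E] [SeminormedAddCommGroup F]
  [Module 𝕜 E] [Module 𝕜 F]

def PackedInBall (p : C → E) (r : C → ℝ) (R : ℝ) : Prop :=
  (∀ c, ‖p c‖ ≤ R - r c) ∧ ∀ c k, c ≠ k → r c + r k ≤ ‖p c - p k‖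

theorem PackedInBall.comp_linearIsometry {p : C → E} {r : C → ℝ} {R : ℝ}
    (h : PackedInBall p r R) (T : E →ₗᵢ[𝕜] F) : PackedInBall (T ∘ p) r R :=
  ⟨fun c => by simpa using h.1 c, fun c k hck => by simpa [← map_sub] using h.2 c k hck⟩

end Packing

namespace EuclideanSpace

variable {ι : Type*} [Fintype ι]

noncomputable def reflectToNonneg (v : EuclideanSpace ℝ ι) :
    EuclideanSpace ℝ ι ≃ₗᵢ[ℝ] EuclideanSpace ℝ ι :=
  LinearIsometryEquiv.piLpCongrRight 2 fun i =>
    if 0 ≤ v i then LinearIsometryEquiv.refl ℝ ℝ else LinearIsometryEquiv.neg ℝ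

theorem reflectToNonneg_apply_self (v : EuclideanSpace ℝ ι) (i : ι) :
    reflectToNonneg v v i = |v i| := by
  by_cases hv : 0 ≤ v i
  · simp [reflectToNonneg, hv, abs_of_nonneg hv]
  · simp [reflectToNonneg, hv, abs_of_neg (not_le.mp hv)]

variable [DecidableEq ι]

noncomputable def swapCoords (i j : ι) : EuclideanSpace ℝ ι ≃ₗᵢ[ℝ] EuclideanSpace ℝ ι :=
  LinearIsometryEquiv.piLpCongrLeft 2 ℝ ℝ (Equiv.swap i j)

theorem swapCoords_apply_left (i j : ι) (v : EuclideanSpace ℝ ι) :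
    swapCoords i j v i = v j := by
  simp [swapCoords, Equiv.piCongrLeft']

theorem swapCoords_apply_right (i j : ι) (v : EuclideanSpace ℝ ι) :
    swapCoords i j v j = v i := by
  simp [swapCoords, Equiv.piCongrLeft']

end EuclideanSpace

open EuclideanSpace in
theorem exists_linearIsometryEquiv_firstQuadrant_and_le (u v : EuclideanSpace ℝ (Fin 2)) :
    ∃ T : EuclideanSpace ℝ (Fin 2) ≃ₗᵢ[ℝ] EuclideanSpace ℝ (Fin 2),
      0 ≤ T u 0 ∧ 0 ≤ T u 1 ∧ T v 0 ≤ T v 1 := by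
  set S := reflectToNonneg u
  have hu : ∀ i, 0 ≤ S u i := fun i => (reflectToNonneg_apply_self u i).symm ▸ abs_nonneg _
  rcases le_total (S v 0) (S v 1) with hv | hv
  · exact ⟨S, hu 0, hu 1, hv⟩
  · refine ⟨S.trans (swapCoords 0 1), ?_, ?_, ?_⟩ <;>
      simp only [LinearIsometryEquiv.trans_apply, swapCoords_apply_left, swapCoords_apply_right]
    exacts [hu 1, hu 0, hv]

theorem symmetry_breaking_general {C : Type*}
    (p : C → EuclideanSpace ℝ (Fin 2)) (r : C → ℝ) (R : ℝ)
    (hin : ∀ c, ‖p c‖ ≤ R - r c)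
    (hsep : ∀ c k, c ≠ k → r c + r k ≤ ‖p c - p k‖)
    (c₁ c₂ : C) :
    ∃ T : EuclideanSpace ℝ (Fin 2) →ₗᵢ[ℝ] EuclideanSpace ℝ (Fin 2),
      (∀ c, ‖T (p c)‖ ≤ R - r c) ∧
      (∀ c k, c ≠ k → r c + r k ≤ ‖T (p c) - T (p k)‖) ∧
      0 ≤ T (p c₁) 0 ∧ 0 ≤ T (p c₁) 1 ∧
      T (p c₂) 0 ≤ T (p c₂) 1 := by
  obtain ⟨T, h₁₀, h₁₁, h₂⟩ := exists_linearIsometryEquiv_firstQuadrant_and_le (p c₁) (p c₂)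
  obtain ⟨hin', hsep'⟩ := PackedInBall.comp_linearIsometry ⟨hin, hsep⟩ T.toLinearIsometry
  exact ⟨T.toLinearIsometry, hin', hsep', h₁₀, h₁₁, h₂⟩

/-- Symmetry breaking: given a packing into the disk of radius `R` centered at the
origin and two distinct indices `c₁, c₂`, there is a linear isometry `T` of the plane
mapping the packing to another packing into the same disk, such that `T (p c₁)` has
both coordinates nonnegative and `T (p c₂) = (x₂, y₂)` satisfies `y₂ ≥ x₂`. -/
theorem symmetry_breaking {C : Type*} [Fintype C]
    (p : C → EuclideanSpace ℝ (Fin 2)) (r : C → ℝ) (R : ℝ)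
    (hR : 0 < R) (hr : ∀ c, 0 < r c)
    (hin : ∀ c, ‖p c‖ ≤ R - r c)
    (hsep : ∀ c k, c ≠ k → r c + r k ≤ ‖p c - p k‖)
    (c₁ c₂ : C) (hne : c₁ ≠ c₂) :
    ∃ T : EuclideanSpace ℝ (Fin 2) →ₗᵢ[ℝ] EuclideanSpace ℝ (Fin 2),
      (∀ c, ‖T (p c)‖ ≤ R - r c) ∧
      (∀ c k, c ≠ k → r c + r k ≤ ‖T (p c) - T (p k)‖) ∧
      0 ≤ T (p c₁) 0 ∧ 0 ≤ T (p c₁) 1 ∧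
      T (p c₂) 0 ≤ T (p c₂) 1 :=
  symmetry_breaking_general p r R hin hsep c₁ c₂
end

section
/- Correctness of the restricted (grid) formulation: let δ > 0, R > 0, and for each c ∈ C let m c ∈ ℤ² be an integer grid point and set p c = δ • m c ∈ ℝ². Assume ‖p c‖ ≤ R − r c for every c, and assume that for every pair of distinct indices c, k ∈ C there exist natural numbers u₁, u₂ with u₁ ≤ |(m c)₁ − (m k)₁|, u₂ ≤ |(m c)₂ − (m k)₂|, and (u₁ δ)² + (u₂ δ)² ≥ (r c + r k)². Then the circles with centers p and radii r are packed into the disk of radius R centered at the origin. In particular, every feasible solution of the restricted integer linear program yields a feasible solution of the circle packing problem with container radius R. -/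
/-- Correctness of the restricted (grid) formulation: if every center `p c` is the grid
point `δ • m c`, every circle satisfies the containment condition `‖p c‖ ≤ R − r c`,
and for every pair of distinct circles there are natural numbers `u₁, u₂` of cells
between their centers on the two axes with `(u₁ δ)² + (u₂ δ)² ≥ (r c + r k)²`, then
the circles are packed into the disk of radius `R` centered at the origin. -/
theorem restricted_formulation_correct {C : Type*} [Fintype C]
    (δ R : ℝ) (hδ : 0 < δ) (hR : 0 < R)
    (r : C → ℝ) (hr : ∀ c, 0 < r c)
    (m : C → Fin 2 → ℤ) (p : C → EuclideanSpace ℝ (Fin 2))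
    (hp : ∀ c i, p c i = δ * (m c i : ℝ))
    (hin : ∀ c, ‖p c‖ ≤ R - r c)
    (hsep : ∀ c k, c ≠ k → ∃ u₁ u₂ : ℕ,
      (u₁ : ℤ) ≤ |m c 0 - m k 0| ∧ (u₂ : ℤ) ≤ |m c 1 - m k 1| ∧
      (r c + r k) ^ 2 ≤ ((u₁ : ℝ) * δ) ^ 2 + ((u₂ : ℝ) * δ) ^ 2) :
    (∀ c, ‖p c‖ ≤ R - r c) ∧
    (∀ c k, c ≠ k → r c + r k ≤ ‖p c - p k‖) := by
  refine ⟨hin, fun c k hck => ?_⟩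
  obtain ⟨u₁, u₂, h₁, h₂, h₃⟩ := hsep c k hck
  have hnorm : ‖p c - p k‖ ^ 2 = (p c 0 - p k 0) ^ 2 + (p c 1 - p k 1) ^ 2 := by
    rw [EuclideanSpace.norm_eq, Real.sq_sqrt (by positivity)]
    simp [Fin.sum_univ_two, Real.norm_eq_abs, sq_abs]
  have e0 : p c 0 - p k 0 = δ * ((m c 0 : ℝ) - (m k 0 : ℝ)) := by
    rw [hp c 0, hp k 0]; ring
  have e1 : p c 1 - p k 1 = δ * ((m c 1 : ℝ) - (m k 1 : ℝ)) := by
    rw [hp c 1, hp k 1]; ring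
  have a0 : ((u₁ : ℝ)) ≤ |(m c 0 : ℝ) - (m k 0 : ℝ)| := by
    exact_mod_cast h₁
  have a1 : ((u₂ : ℝ)) ≤ |(m c 1 : ℝ) - (m k 1 : ℝ)| := by
    exact_mod_cast h₂
  have s0 : ((u₁ : ℝ) * δ) ^ 2 ≤ (p c 0 - p k 0) ^ 2 := by
    rw [e0]
    have h : ((u₁ : ℝ) * δ) ^ 2 ≤ (δ * |(m c 0 : ℝ) - (m k 0 : ℝ)|) ^ 2 := by
      apply pow_le_pow_left₀ (by positivity)
      nlinarith [mul_le_mul_of_nonneg_left a0 hδ.le]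
    calc ((u₁ : ℝ) * δ) ^ 2 ≤ (δ * |(m c 0 : ℝ) - (m k 0 : ℝ)|) ^ 2 := h
      _ = (δ * ((m c 0 : ℝ) - (m k 0 : ℝ))) ^ 2 := by rw [mul_pow, mul_pow, sq_abs]
  have s1 : ((u₂ : ℝ) * δ) ^ 2 ≤ (p c 1 - p k 1) ^ 2 := by
    rw [e1]
    have h : ((u₂ : ℝ) * δ) ^ 2 ≤ (δ * |(m c 1 : ℝ) - (m k 1 : ℝ)|) ^ 2 := by
      apply pow_le_pow_left₀ (by positivity)
      nlinarith [mul_le_mul_of_nonneg_left a1 hδ.le]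
    calc ((u₂ : ℝ) * δ) ^ 2 ≤ (δ * |(m c 1 : ℝ) - (m k 1 : ℝ)|) ^ 2 := h
      _ = (δ * ((m c 1 : ℝ) - (m k 1 : ℝ))) ^ 2 := by rw [mul_pow, mul_pow, sq_abs]
  have hsq : (r c + r k) ^ 2 ≤ ‖p c - p k‖ ^ 2 := by
    rw [hnorm]; linarith
  have hpos : 0 < r c + r k := by have := hr c; have := hr k; linarith
  nlinarith [norm_nonneg (p c - p k)]
end

section
/- The relaxed formulation covers all feasible packings (non-overlapping part): let δ > 0 and let p = (p₁, p₂), q = (q₁, q₂) ∈ ℝ² satisfy ‖p − q‖ ≥ r + s for some r, s > 0. Then the lower-left corners of the δ-cells containing p and q satisfy the relaxed separation condition: ((|⌊p₁/δ⌋ − ⌊q₁/δ⌋| + 1) δ)² + ((|⌊p₂/δ⌋ − ⌊q₂/δ⌋| + 1) δ)² ≥ (r + s)². Consequently, if the relaxed condition fails for every admissible assignment of circles to cells, then no feasible packing with the given radii exists. -/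
lemma coord_bound (δ : ℝ) (hδ : 0 < δ) (x y : ℝ) :
    |x - y| ≤ ((|⌊x / δ⌋ - ⌊y / δ⌋| + 1 : ℤ) : ℝ) * δ := by
  have h1 : x / δ - y / δ ≤ ((⌊x / δ⌋ - ⌊y / δ⌋ : ℤ) : ℝ) + 1 := by
    have := Int.lt_floor_add_one (x / δ)
    have := Int.floor_le (y / δ)
    push_cast
    linarith
  have h2 : y / δ - x / δ ≤ ((⌊y / δ⌋ - ⌊x / δ⌋ : ℤ) : ℝ) + 1 := by
    have := Int.lt_floor_add_one (y / δ)
    have := Int.floor_le (x / δ)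
    push_cast
    linarith
  have key : |x / δ - y / δ| ≤ ((|⌊x / δ⌋ - ⌊y / δ⌋| + 1 : ℤ) : ℝ) := by
    have ha := le_abs_self ((⌊x / δ⌋ : ℝ) - (⌊y / δ⌋ : ℝ))
    have hb := neg_abs_le ((⌊x / δ⌋ : ℝ) - (⌊y / δ⌋ : ℝ))
    rw [abs_le]
    push_cast [Int.cast_abs] at h1 h2 ⊢
    constructor <;> linarith
  have : |x - y| = |x / δ - y / δ| * δ := by
    rw [div_sub_div_same, abs_div, abs_of_pos hδ, div_mul_cancel₀]
    exact hδ.ne'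
  rw [this]
  exact mul_le_mul_of_nonneg_right key hδ.le

/-- The relaxed formulation covers all feasible packings: if two circle centers `p, q`
satisfy the non-overlapping condition `‖p − q‖ ≥ r + s`, then the lower-left corners
of the `δ`-cells containing them satisfy the relaxed separation condition. -/
theorem relaxed_formulation_covers_packings
    (δ : ℝ) (hδ : 0 < δ) (r s : ℝ) (hr : 0 < r) (hs : 0 < s)
    (p q : EuclideanSpace ℝ (Fin 2)) (h : r + s ≤ ‖p - q‖) :
    (r + s) ^ 2 ≤
      (((|⌊p 0 / δ⌋ - ⌊q 0 / δ⌋| + 1 : ℤ) : ℝ) * δ) ^ 2 +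
      (((|⌊p 1 / δ⌋ - ⌊q 1 / δ⌋| + 1 : ℤ) : ℝ) * δ) ^ 2 := by
  have hnorm : ‖p - q‖ ^ 2 = (p 0 - q 0) ^ 2 + (p 1 - q 1) ^ 2 := by
    rw [EuclideanSpace.norm_eq]
    rw [Real.sq_sqrt (by positivity)]
    simp [Fin.sum_univ_two, sq_abs]
  have h1 := coord_bound δ hδ (p 0) (q 0)
  have h2 := coord_bound δ hδ (p 1) (q 1)
  have hb1 : (p 0 - q 0) ^ 2 ≤ (((|⌊p 0 / δ⌋ - ⌊q 0 / δ⌋| + 1 : ℤ) : ℝ) * δ) ^ 2 := by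
    calc (p 0 - q 0) ^ 2 = |p 0 - q 0| ^ 2 := (sq_abs _).symm
    _ ≤ _ := by apply pow_le_pow_left₀ (abs_nonneg _) h1
  have hb2 : (p 1 - q 1) ^ 2 ≤ (((|⌊p 1 / δ⌋ - ⌊q 1 / δ⌋| + 1 : ℤ) : ℝ) * δ) ^ 2 := by
    calc (p 1 - q 1) ^ 2 = |p 1 - q 1| ^ 2 := (sq_abs _).symm
    _ ≤ _ := by apply pow_le_pow_left₀ (abs_nonneg _) h2
  have hrs : (r + s) ^ 2 ≤ ‖p - q‖ ^ 2 := by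
    apply pow_le_pow_left₀ (by positivity) h
  linarith
end

section
/- Bounded overlap in the relaxed formulation: let δ > 0, let a, b ∈ ℝ² be lower-left corners of two δ-cells satisfying the relaxed separation condition (|a₁ − b₁| + δ)² + (|a₂ − b₂| + δ)² ≥ s² for some s > 0, and let p ∈ [a₁, a₁ + δ] × [a₂, a₂ + δ] and q ∈ [b₁, b₁ + δ] × [b₂, b₂ + δ]. Then ‖p − q‖ ≥ s − 2√2 · δ. In particular, in any solution of the relaxed formulation two circles of radii r and s' with r + s' = s can overlap by a depth of at most 2√2 · δ. -/
/-- Bounded overlap in the relaxed formulation: if the two `δ`-cells with lower-left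
corners `a` and `b` satisfy the relaxed separation condition for distance `s`, then
any two points `p, q` of the respective cells satisfy `‖p − q‖ ≥ s − 2√2·δ`. -/
theorem relaxed_formulation_bounded_overlap
    (δ s : ℝ) (hδ : 0 < δ) (hs : 0 < s)
    (a b p q : EuclideanSpace ℝ (Fin 2))
    (hsep : s ^ 2 ≤ (|a 0 - b 0| + δ) ^ 2 + (|a 1 - b 1| + δ) ^ 2)
    (hp : ∀ i, p i ∈ Set.Icc (a i) (a i + δ))
    (hq : ∀ i, q i ∈ Set.Icc (b i) (b i + δ)) :
    s - 2 * Real.sqrt 2 * δ ≤ ‖p - q‖ := by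
  obtain ⟨hp0l, hp0r⟩ := hp 0
  obtain ⟨hp1l, hp1r⟩ := hp 1
  obtain ⟨hq0l, hq0r⟩ := hq 0
  obtain ⟨hq1l, hq1r⟩ := hq 1
  have hab0 : |a 0 - b 0| ≤ |p 0 - q 0| + δ := by
    have h2 : -|p 0 - q 0| ≤ p 0 - q 0 ∧ p 0 - q 0 ≤ |p 0 - q 0| :=
      ⟨neg_abs_le _, le_abs_self _⟩
    rw [abs_le]; constructor <;> linarith [h2.1, h2.2]
  have hab1 : |a 1 - b 1| ≤ |p 1 - q 1| + δ := by
    have h2 : -|p 1 - q 1| ≤ p 1 - q 1 ∧ p 1 - q 1 ≤ |p 1 - q 1| :=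
      ⟨neg_abs_le _, le_abs_self _⟩
    rw [abs_le]; constructor <;> linarith [h2.1, h2.2]
  set u := |p 0 - q 0| with hu
  set v := |p 1 - q 1| with hv
  have hu0 : 0 ≤ u := abs_nonneg _
  have hv0 : 0 ≤ v := abs_nonneg _
  have hs2 : s ^ 2 ≤ (u + 2 * δ) ^ 2 + (v + 2 * δ) ^ 2 := by
    nlinarith [abs_nonneg (a 0 - b 0), abs_nonneg (a 1 - b 1), hsep, hab0, hab1]
  have hnorm : ‖p - q‖ = Real.sqrt (u ^ 2 + v ^ 2) := by
    rw [EuclideanSpace.norm_eq]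
    congr 1
    simp only [Fin.sum_univ_two, Real.norm_eq_abs, hu, hv, sq_abs]
    rfl
  set W := Real.sqrt (u ^ 2 + v ^ 2) with hWdef
  have hW0 : 0 ≤ W := Real.sqrt_nonneg _
  have hW2 : W ^ 2 = u ^ 2 + v ^ 2 := Real.sq_sqrt (by positivity)
  set r := Real.sqrt 2 with hr
  have hr2 : r ^ 2 = 2 := Real.sq_sqrt (by norm_num)
  have hr0 : 0 ≤ r := Real.sqrt_nonneg 2
  clear_value u v W r
  clear hsep hp hq hab0 hab1 hu hv hWdef hr hp0l hp0r hp1l hp1r hq0l hq0r hq1l hq1r a b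
  have huv : u + v ≤ r * W := by
    have h2 : 0 ≤ r * W := mul_nonneg hr0 hW0
    have h1 : (u + v) ^ 2 ≤ (r * W) ^ 2 := by
      have : (r * W) ^ 2 = 2 * (u ^ 2 + v ^ 2) := by
        rw [mul_pow, hr2, hW2]
      rw [this]
      nlinarith [sq_nonneg (u - v)]
    calc u + v = Real.sqrt ((u + v) ^ 2) := (Real.sqrt_sq (by positivity)).symm
      _ ≤ Real.sqrt ((r * W) ^ 2) := Real.sqrt_le_sqrt h1
      _ = r * W := Real.sqrt_sq h2
  have key : s ≤ W + 2 * r * δ := by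
    have h3 : 4 * δ * (u + v) ≤ 4 * δ * (r * W) :=
      mul_le_mul_of_nonneg_left huv (by linarith)
    have hsq : s ^ 2 ≤ (W + 2 * r * δ) ^ 2 := by
      have hexp : (W + 2 * r * δ) ^ 2 = W ^ 2 + 4 * δ * (r * W) + 4 * r ^ 2 * δ ^ 2 := by
        ring
      rw [hexp, hW2, hr2]
      nlinarith [hs2, h3, sq_nonneg δ]
    have hT : 0 ≤ W + 2 * r * δ :=
      add_nonneg hW0 (mul_nonneg (mul_nonneg (by norm_num) hr0) hδ.le)
    calc s = Real.sqrt (s ^ 2) := (Real.sqrt_sq hs.le).symm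
      _ ≤ Real.sqrt ((W + 2 * r * δ) ^ 2) := Real.sqrt_le_sqrt hsq
      _ = W + 2 * r * δ := Real.sqrt_sq hT
  rw [hnorm]
  linarith
end
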